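/- For a graph G with terminals x, y and xy ∉ E(G): the underlying unlabeled graph of G⁺ = G + xy is critical for Euler genus if and only if G is ĝ⁺-critical, θ(G) > 0, and ĝ(G/xy) < ĝ⁺(G). -/

import Mathlib

open scoped Classical

namespace GenusPaper

variable {V : Type}

/-- Identify vertex `v` with vertex `u`: all edges incident with `v` are transferred
to `u`, and `v` becomes isolated; multiple edges are implicitly simplified.
When `u` and `v` are adjacent this is contraction of the edge `uv`. -/
def contractPair (G : SimpleGraph V) (u v : V) : SimpleGraph V where
  Adj a b := a ≠ b ∧ ∃ a' b' : V,
    (if a' = v then u else a') = a ∧ (if b' = v then u else b') = b ∧ G.Adj a' b'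
  symm := ⟨by
    rintro a b ⟨h, a', b', ha, hb, hadj⟩
    exact ⟨h.symm, b', a', hb, ha, hadj.symm⟩⟩
  loopless := ⟨by rintro a ⟨h, -⟩; exact h rfl⟩

/-- A (cellular) embedding of `G` into a surface, given combinatorially by a rotation
system together with a signature.  `rot` fixes the tail of each dart and acts as a single
cyclic rotation on the darts based at each vertex; `sign` is the edge signature. -/
structure Emb (G : SimpleGraph V) where
  rot : Equiv.Perm G.Dart
  sign : G.Dart → Bool
  rot_fst : ∀ d : G.Dart, (rot d).toProd.1 = d.toProd.1
  rot_cyclic : ∀ d d' : G.Dart, d.toProd.1 = d'.toProd.1 → ∃ n : ℕ, (rot ^ n) d = d'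
  sign_symm : ∀ d : G.Dart, sign d.symm = sign d

/-- The face-tracing map on flags (darts with a current sign). -/
def Emb.faceNext {G : SimpleGraph V} (E : Emb G) (p : G.Dart × Bool) : G.Dart × Bool :=
  (if xor p.2 (E.sign p.1) then E.rot p.1.symm else E.rot.symm p.1.symm,
    xor p.2 (E.sign p.1))

/-- Number of orbits of the face-tracing map; each face is traced twice. -/
noncomputable def Emb.faceCount {G : SimpleGraph V} (E : Emb G) : ℕ :=
  Nat.card (Quot fun p q : G.Dart × Bool => E.faceNext p = q)

/-- Euler genus of an embedding, via Euler's formula (summed over the connected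
components of the graph; isolated vertices are discarded). -/
noncomputable def Emb.genus {G : SimpleGraph V} (E : Emb G) : ℤ :=
  2 * (Nat.card (G.induce G.support).ConnectedComponent : ℤ)
    - (Nat.card G.support : ℤ) + (Nat.card G.edgeSet : ℤ)
    - ((E.faceCount / 2 : ℕ) : ℤ)

/-- The Euler genus of a graph: minimum Euler genus over all embeddings. -/
noncomputable def eulerGenus (G : SimpleGraph V) : ℕ :=
  sInf {n : ℕ | ∃ E : Emb G, E.genus = (n : ℤ)}

/-- An embedding is orientable iff its signature is switching-equivalent to the trivial
one, i.e. there is no cycle with an odd number of negative edges. -/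
def Emb.Orientable {G : SimpleGraph V} (E : Emb G) : Prop :=
  ∃ f : V → Bool, ∀ d : G.Dart, E.sign d = xor (f d.toProd.1) (f d.toProd.2)

/-- Nonorientable genus: minimum Euler genus over nonorientable embeddings. -/
noncomputable def nonorientableGenus (G : SimpleGraph V) : ℕ :=
  sInf {n : ℕ | ∃ E : Emb G, ¬ E.Orientable ∧ E.genus = (n : ℤ)}

/-- Orientable genus: half the minimum Euler genus over orientable embeddings. -/
noncomputable def orientableGenus (G : SimpleGraph V) : ℕ :=
  sInf {n : ℕ | ∃ E : Emb G, E.Orientable ∧ E.genus = (n : ℤ)} / 2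

/-- `G⁺ = G + xy`. -/
def addEdge (G : SimpleGraph V) (x y : V) : SimpleGraph V :=
  G ⊔ SimpleGraph.fromEdgeSet {s(x, y)}

/-- `ĝ⁺(G) = ĝ(G + xy)`. -/
noncomputable def egp (G : SimpleGraph V) (x y : V) : ℕ := eulerGenus (addEdge G x y)

/-- `σ(H) = ĝ̃(H) − ĝ(H)`; equals 1 iff `H` is orientably simple. -/
noncomputable def sigma (H : SimpleGraph V) : ℕ := nonorientableGenus H - eulerGenus H

/-- A minor-operation: deletion or contraction of an edge. -/
inductive MinorOp (V : Type) : Type where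
  | del : V → V → MinorOp V
  | con : V → V → MinorOp V

/-- Applying a minor-operation to a graph (without terminals). -/
def MinorOp.apply (μ : MinorOp V) (G : SimpleGraph V) : SimpleGraph V :=
  match μ with
  | .del u v => G.deleteEdges {s(u, v)}
  | .con u v => contractPair G u v

/-- Applying a minor-operation to a graph with terminals `x, y`: when contracting an
edge incident with a terminal, the resulting vertex is the terminal. -/
noncomputable def MinorOp.applyT (μ : MinorOp V) (G : SimpleGraph V) (x y : V) : SimpleGraph V :=
  match μ with
  | .del u v => G.deleteEdges {s(u, v)}
  | .con u v => if v = x ∨ v = y then contractPair G v u else contractPair G u v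

/-- Availability of a minor-operation for a graph without terminals. -/
def MinorOp.Valid (μ : MinorOp V) (G : SimpleGraph V) : Prop :=
  match μ with
  | .del u v => G.Adj u v
  | .con u v => G.Adj u v

/-- Availability of a minor-operation for a graph with terminals `x, y`:
the edge `xy` may not be contracted. -/
def MinorOp.ValidT (μ : MinorOp V) (G : SimpleGraph V) (x y : V) : Prop :=
  match μ with
  | .del u v => G.Adj u v
  | .con u v => G.Adj u v ∧ s(u, v) ≠ s(x, y)

/-- `G` is `P`-critical (no terminals): each minor-operation decreases `P`. -/
def Critical (P : SimpleGraph V → ℕ) (G : SimpleGraph V) : Prop :=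
  ∀ μ : MinorOp V, μ.Valid G → P (μ.apply G) < P G

/-- `G` is `P`-critical as a graph with terminals `x, y`. -/
def CriticalT (P : SimpleGraph V → ℕ) (G : SimpleGraph V) (x y : V) : Prop :=
  ∀ μ : MinorOp V, μ.ValidT G x y → P (μ.applyT G x y) < P G

/-- Connectedness of the graph on its non-isolated vertices. -/
def ConnOn (G : SimpleGraph V) : Prop := (G.induce G.support).Connected

/-- `G` is the `xy`-sum of `G₁` and `G₂`: their union, the parts sharing exactly the
two terminals `x, y`, with the edge `xy` absent from both parts. -/
structure IsXYSum (G G₁ G₂ : SimpleGraph V) (x y : V) : Prop where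
  ne : x ≠ y
  eq : G = G₁ ⊔ G₂
  nadj₁ : ¬ G₁.Adj x y
  nadj₂ : ¬ G₂.Adj x y
  inter : ∀ v : V, v ∈ G₁.support → v ∈ G₂.support → v = x ∨ v = y
  x₁ : x ∈ G₁.support
  y₁ : y ∈ G₁.support
  x₂ : x ∈ G₂.support
  y₂ : y ∈ G₂.support

/-- `θ(G) = ĝ⁺(G) − ĝ(G)`. -/
noncomputable def theta (G : SimpleGraph V) (x y : V) : ℕ := egp G x y - eulerGenus G

/-- `η(G₁, G₂) = θ(G₁) + θ(G₂)`. -/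
noncomputable def eta (G₁ G₂ : SimpleGraph V) (x y : V) : ℕ :=
  theta G₁ x y + theta G₂ x y

/-- A cascade: every minor-operation decreases `ĝ` or `ĝ⁺`, but `G` is neither
`ĝ`-critical nor `ĝ⁺`-critical. -/
def Cascade (G : SimpleGraph V) (x y : V) : Prop :=
  ¬ G.Adj x y ∧
  (∀ μ : MinorOp V, μ.ValidT G x y →
      eulerGenus (μ.applyT G x y) < eulerGenus G ∨ egp (μ.applyT G x y) x y < egp G x y) ∧
  ¬ CriticalT eulerGenus G x y ∧ ¬ CriticalT (fun H => egp H x y) G x y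

/-- A weak `ĝ`-hopper. -/
def WeakEgHopper (G : SimpleGraph V) (x y : V) : Prop :=
  ¬ CriticalT (fun H => egp H x y) G x y ∧
  ∀ μ : MinorOp V, μ.ValidT G x y →
    egp (μ.applyT G x y) x y < egp G x y ∨ eulerGenus (μ.applyT G x y) + 2 ≤ eulerGenus G

/-- A weak `ĝ⁺`-hopper. -/
def WeakEgpHopper (G : SimpleGraph V) (x y : V) : Prop :=
  ¬ CriticalT eulerGenus G x y ∧
  ∀ μ : MinorOp V, μ.ValidT G x y →
    eulerGenus (μ.applyT G x y) < eulerGenus G ∨ egp (μ.applyT G x y) x y + 2 ≤ egp G x y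

/-- Deletion-minimal graph of minimum degree ≥ 3 (member of `E*`). -/
def DeletionMinimal (H : SimpleGraph V) : Prop :=
  (∀ v ∈ H.support, 3 ≤ Nat.card {w : V | H.Adj v w}) ∧
  ∀ u v : V, H.Adj u v → eulerGenus (H.deleteEdges {s(u, v)}) < eulerGenus H
/-! The minor-operations on `G + xy` are the deletion of `xy`, which gives back `G`, the
contraction of `xy`, which gives `G/xy`, and the operations on the other edges, each of which
commutes with adding `xy` and so produces `μG + xy`. Comparing genera on both sides gives the
three conditions. The terminal convention of `MinorOp.applyT` (the merged vertex keeps the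
terminal's name) differs from `MinorOp.apply` only by relabelling two vertices, and Euler genus
is invariant under graph isomorphism, since rotation systems transport along isomorphisms. -/

open SimpleGraph

section Transport

variable {W : Type} {G : SimpleGraph V} {G' : SimpleGraph W}

def dartEquivOfIso (φ : G ≃g G') : G.Dart ≃ G'.Dart where
  toFun := φ.toHom.mapDart
  invFun := φ.symm.toHom.mapDart
  left_inv d := by ext <;> simp
  right_inv d := by ext <;> simp

@[simp]
lemma dartEquivOfIso_fst (φ : G ≃g G') (d : G.Dart) :
    (dartEquivOfIso φ d).toProd.1 = φ d.toProd.1 := rfl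

@[simp]
lemma dartEquivOfIso_symm_fst (φ : G ≃g G') (d : G'.Dart) :
    ((dartEquivOfIso φ).symm d).toProd.1 = φ.symm d.toProd.1 := rfl

@[simp]
lemma dartEquivOfIso_dart_symm (φ : G ≃g G') (d : G.Dart) :
    dartEquivOfIso φ d.symm = (dartEquivOfIso φ d).symm := rfl

@[simp]
lemma dartEquivOfIso_symm_dart_symm (φ : G ≃g G') (d : G'.Dart) :
    (dartEquivOfIso φ).symm d.symm = ((dartEquivOfIso φ).symm d).symm := rfl

def Emb.mapIso (φ : G ≃g G') (E : Emb G) : Emb G' where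
  rot := (dartEquivOfIso φ).permCongr E.rot
  sign := E.sign ∘ (dartEquivOfIso φ).symm
  rot_fst d := by simp [E.rot_fst]
  rot_cyclic d d' h := by
    obtain ⟨n, hn⟩ := E.rot_cyclic ((dartEquivOfIso φ).symm d) ((dartEquivOfIso φ).symm d')
      (by simp [h])
    refine ⟨n, ?_⟩
    rw [← Equiv.permCongrHom_coe, ← map_pow, Equiv.permCongrHom_coe, Equiv.permCongr_apply, hn,
      Equiv.apply_symm_apply]
  sign_symm d := by simp [E.sign_symm]

lemma Emb.mapIso_faceNext (φ : G ≃g G') (E : Emb G) (p : G.Dart × Bool) :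
    (E.mapIso φ).faceNext ((dartEquivOfIso φ).prodCongr (Equiv.refl Bool) p)
      = (dartEquivOfIso φ).prodCongr (Equiv.refl Bool) (E.faceNext p) := by
  by_cases hp : xor p.2 (E.sign p.1) <;>
    simp [Emb.faceNext, Emb.mapIso, hp, Equiv.symm_apply_eq]

lemma Emb.faceCount_mapIso (φ : G ≃g G') (E : Emb G) :
    (E.mapIso φ).faceCount = E.faceCount := by
  refine Nat.card_congr (Quot.congr ((dartEquivOfIso φ).prodCongr (Equiv.refl Bool)) ?_).symm
  intro p q
  rw [E.mapIso_faceNext φ]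
  exact ((dartEquivOfIso φ).prodCongr (Equiv.refl Bool)).injective.eq_iff.symm

lemma Emb.genus_mapIso (φ : G ≃g G') (E : Emb G) : (E.mapIso φ).genus = E.genus := by
  have hsupp : Set.BijOn φ G.support G'.support :=
    φ.toEquiv.bijOn fun v => by simp [mem_support, φ.surjective.exists, Iso.map_adj_iff]
  have hcomp := Nat.card_congr ((φ.induce hsupp).connectedComponentEquiv)
  have hvert := Nat.card_congr (hsupp.equiv φ)
  have hedge := Nat.card_congr φ.mapEdgeSet
  simp only [Emb.genus, E.faceCount_mapIso, hcomp, hvert, hedge]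

lemma eulerGenus_eq_of_iso (φ : G ≃g G') : eulerGenus G = eulerGenus G' := by
  suffices h : ∀ n : ℕ, (∃ E : Emb G, E.genus = n) ↔ ∃ E : Emb G', E.genus = n by
    simp only [eulerGenus, h]
  refine fun n => ⟨fun ⟨E, hE⟩ => ⟨E.mapIso φ, ?_⟩, fun ⟨E, hE⟩ => ⟨E.mapIso φ.symm, ?_⟩⟩ <;>
    rwa [Emb.genus_mapIso]

end Transport

lemma swap_ite_eq (u v w : V) :
    Equiv.swap u v (if w = v then u else w) = if w = u then v else w := by
  grind

lemma map_swap_contractPair (H : SimpleGraph V) (u v : V) :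
    (contractPair H u v).map (Equiv.swap u v) = contractPair H v u := by
  ext a b
  rw [← Equiv.coe_toEmbedding, map_adj]
  simp only [contractPair, Equiv.coe_toEmbedding]
  constructor
  · rintro ⟨a, b, ⟨hne, a', b', rfl, rfl, h⟩, rfl, rfl⟩
    exact ⟨(Equiv.swap u v).injective.ne hne, a', b', (swap_ite_eq ..).symm,
      (swap_ite_eq ..).symm, h⟩
  · rintro ⟨hne, a', b', rfl, rfl, h⟩
    rw [← swap_ite_eq u v a', ← swap_ite_eq u v b', (Equiv.swap u v).injective.ne_iff] at hne
    exact ⟨_, _, ⟨hne, a', b', rfl, rfl, h⟩, swap_ite_eq .., swap_ite_eq ..⟩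

lemma eulerGenus_contractPair_comm (H : SimpleGraph V) (u v : V) :
    eulerGenus (contractPair H u v) = eulerGenus (contractPair H v u) := by
  rw [eulerGenus_eq_of_iso (Iso.map (Equiv.swap u v) _), map_swap_contractPair]

@[simp]
lemma addEdge_adj {G : SimpleGraph V} {x y a b : V} :
    (addEdge G x y).Adj a b ↔ G.Adj a b ∨ (s(a, b) = s(x, y) ∧ a ≠ b) := by
  simp [addEdge]

lemma addEdge_adj_self (G : SimpleGraph V) {x y : V} (hxy : x ≠ y) :
    (addEdge G x y).Adj x y := by
  simp [hxy]

lemma deleteEdges_addEdge_self {G : SimpleGraph V} {x y : V} (hnadj : ¬ G.Adj x y) :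
    (addEdge G x y).deleteEdges {s(x, y)} = G := by
  ext a b
  simp only [deleteEdges_adj, addEdge_adj, Set.mem_singleton_iff]
  grind [SimpleGraph.Adj.symm]

lemma deleteEdges_addEdge_of_ne (G : SimpleGraph V) {x y u v : V} (hs : s(u, v) ≠ s(x, y)) :
    (addEdge G x y).deleteEdges {s(u, v)} = addEdge (G.deleteEdges {s(u, v)}) x y := by
  ext a b
  simp only [deleteEdges_adj, addEdge_adj, Set.mem_singleton_iff]
  grind

lemma contractPair_addEdge_self (G : SimpleGraph V) (x y : V) :
    contractPair (addEdge G x y) x y = contractPair G x y := by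
  ext a b
  simp only [contractPair, addEdge_adj]
  grind

lemma contractPair_addEdge_of_ne (G : SimpleGraph V) {x y u v : V} (hvx : v ≠ x) (hvy : v ≠ y) :
    contractPair (addEdge G x y) u v = addEdge (contractPair G u v) x y := by
  ext a b
  simp only [contractPair, addEdge_adj]
  grind

lemma eulerGenus_contractPair_addEdge_of_eq (G : SimpleGraph V) {x y u v : V}
    (h : s(u, v) = s(x, y)) :
    eulerGenus (contractPair (addEdge G x y) u v) = eulerGenus (contractPair G x y) := by
  rcases Sym2.eq_iff.mp h with ⟨rfl, rfl⟩ | ⟨rfl, rfl⟩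
  · rw [contractPair_addEdge_self]
  · rw [eulerGenus_contractPair_comm, contractPair_addEdge_self]

def MinorOp.edge : MinorOp V → Sym2 V
  | .del u v => s(u, v)
  | .con u v => s(u, v)

lemma MinorOp.validT_iff {G : SimpleGraph V} {x y : V} (hnadj : ¬ G.Adj x y) (μ : MinorOp V) :
    μ.ValidT G x y ↔ μ.Valid (addEdge G x y) ∧ μ.edge ≠ s(x, y) := by
  have hne : ∀ {u v}, G.Adj u v → s(u, v) ≠ s(x, y) := fun huv h =>
    hnadj (by rwa [← mem_edgeSet, ← h])
  cases μ <;> simp only [MinorOp.ValidT, MinorOp.Valid, MinorOp.edge, addEdge_adj] <;> grind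

lemma MinorOp.eulerGenus_apply_addEdge {G : SimpleGraph V} {x y : V} {μ : MinorOp V}
    (hμ : μ.Valid (addEdge G x y)) (he : μ.edge ≠ s(x, y)) :
    eulerGenus (μ.apply (addEdge G x y)) = egp (μ.applyT G x y) x y := by
  cases μ with
  | del u v => exact congrArg eulerGenus (deleteEdges_addEdge_of_ne G he)
  | con u v =>
    have huv : u ≠ v := hμ.ne
    simp only [MinorOp.edge] at he
    simp only [MinorOp.apply, MinorOp.applyT, egp]
    split_ifs with hv
    · have hu : u ≠ x ∧ u ≠ y := by grind
      rw [eulerGenus_contractPair_comm, contractPair_addEdge_of_ne G hu.1 hu.2]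
    · obtain ⟨hvx, hvy⟩ := not_or.mp hv
      rw [contractPair_addEdge_of_ne G hvx hvy]

theorem gplus_critical_iff_general {V : Type} (G : SimpleGraph V) (x y : V)
    (hxy : x ≠ y) (hnadj : ¬ G.Adj x y) :
    Critical eulerGenus (addEdge G x y) ↔
      (CriticalT (fun H => egp H x y) G x y ∧ eulerGenus G < egp G x y ∧
        eulerGenus (contractPair G x y) < egp G x y) := by
  constructor
  · intro h
    refine ⟨fun μ hμ => ?_, ?_, ?_⟩
    · obtain ⟨hv, he⟩ := (MinorOp.validT_iff hnadj μ).1 hμ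
      have hdrop := h μ hv
      rwa [MinorOp.eulerGenus_apply_addEdge hv he] at hdrop
    · simpa only [egp, MinorOp.apply, deleteEdges_addEdge_self hnadj] using
        h (.del x y) (addEdge_adj_self G hxy)
    · simpa only [egp, MinorOp.apply, contractPair_addEdge_self] using
        h (.con x y) (addEdge_adj_self G hxy)
  · rintro ⟨hcrit, hθ, hcon⟩ μ hμ
    by_cases he : μ.edge = s(x, y)
    · cases μ with
      | del u v =>
        simp only [MinorOp.edge] at he
        rwa [MinorOp.apply, he, deleteEdges_addEdge_self hnadj]
      | con u v => rwa [MinorOp.apply, eulerGenus_contractPair_addEdge_of_eq G he]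
    · rw [MinorOp.eulerGenus_apply_addEdge hμ he]
      exact hcrit μ ((MinorOp.validT_iff hnadj μ).2 ⟨hμ, he⟩)

/-- The underlying unlabeled graph of `G⁺` is critical for Euler genus iff `G` is
`ĝ⁺`-critical, `θ(G) > 0`, and `ĝ(G/xy) < ĝ⁺(G)`. -/
theorem gplus_critical_iff {V : Type} [Fintype V] (G : SimpleGraph V) (x y : V)
    (hxy : x ≠ y) (hnadj : ¬ G.Adj x y) :
    Critical eulerGenus (addEdge G x y) ↔
      (CriticalT (fun H => egp H x y) G x y ∧ eulerGenus G < egp G x y ∧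
        eulerGenus (contractPair G x y) < egp G x y) :=
  gplus_critical_iff_general G x y hxy hnadj

end GenusPaper
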